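/- Let l ≥ 1 and let X = {x ∈ ℝ^l : x_i > 0 for all i} be the open positive orthant. Let f : X → ℝ be continuous on X. Then the following are equivalent: (a) for every sequence (x_k)_{k∈ℕ} ⊂ X and every y ∈ X such that y_i ≤ liminf_{k→∞} (x_k)_i for every component i = 1,…,l (the liminf taken in ℝ ∪ {±∞}), one has f(y) ≤ liminf_{k→∞} f(x_k); (b) f is monotonically increasing with respect to the componentwise order, i.e., for all y, z ∈ X with y_i ≤ z_i for every i it holds that f(y) ≤ f(z). -/

import Mathlib

open Filter Topology

section

variable {ι : Type*} [Finite ι]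

theorem eventually_sub_const_le_of_le_liminf {α : Type*} {L : Filter α} {x : α → ι → ℝ}
    {y : ι → ℝ} (hxy : ∀ i, (y i : EReal) ≤ liminf (fun k => (x k i : EReal)) L)
    {δ : ℝ} (hδ : 0 < δ) : ∀ᶠ k in L, y - (fun _ => δ) ≤ x k := by
  have hlt : ∀ i, ((y i - δ : ℝ) : EReal) < liminf (fun k => (x k i : EReal)) L := fun i =>
    lt_of_lt_of_le (EReal.coe_lt_coe_iff.mpr (sub_lt_self _ hδ)) (hxy i)
  filter_upwards [eventually_all.mpr fun i => eventually_lt_of_lt_liminf (hlt i)] with k hk i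
  exact (EReal.coe_lt_coe_iff.mp (hk i)).le

/-- Points `y - δ` approach `y` from below, and each of them lies eventually below the `x k`;
monotonicity bounds `f (y - δ)` by the liminf and continuity lets `δ → 0⁺`. -/
theorem MonotoneOn.le_liminf_of_le_liminf {α : Type*} {L : Filter α} {f : (ι → ℝ) → ℝ}
    {X : Set (ι → ℝ)} (hmono : MonotoneOn f X) {y : ι → ℝ} (hX : X ∈ 𝓝 y)
    (hfy : ContinuousAt f y) {x : α → ι → ℝ} (hx : ∀ k, x k ∈ X)
    (hxy : ∀ i, (y i : EReal) ≤ liminf (fun k => (x k i : EReal)) L) :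
    (f y : EReal) ≤ liminf (fun k => (f (x k) : EReal)) L := by
  have hbelow : ∀ δ > 0, y - (fun _ => δ) ∈ X →
      (f (y - fun _ => δ) : EReal) ≤ liminf (fun k => (f (x k) : EReal)) L := by
    intro δ hδ hyδ
    refine le_liminf_of_le (by isBoundedDefault) ?_
    filter_upwards [eventually_sub_const_le_of_le_liminf hxy hδ] with k hk
    exact EReal.coe_le_coe_iff.mpr (hmono hyδ (hx k) hk)
  have htend : Tendsto (fun δ : ℝ => y - fun _ => δ) (𝓝[>] 0) (𝓝 y) := by
    have : Continuous fun δ : ℝ => y - fun _ => δ := by fun_prop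
    exact (this.tendsto' 0 y (by ext; simp)).mono_left nhdsWithin_le_nhds
  refine le_of_tendsto ((continuous_coe_real_ereal.tendsto _).comp (hfy.tendsto.comp htend)) ?_
  filter_upwards [self_mem_nhdsWithin, htend hX] with δ hδ hyδ
  exact hbelow δ hδ hyδ

end

theorem isOpen_setOf_forall_pos {ι : Type*} [Finite ι] :
    IsOpen {x : ι → ℝ | ∀ i, 0 < x i} := by
  simpa only [Set.ofPred_forall] using
    isOpen_iInter_of_finite fun i => isOpen_lt continuous_const (continuous_apply i)

theorem stmt_0_general (l : ℕ) (f : (Fin l → ℝ) → ℝ)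
    (X : Set (Fin l → ℝ)) (hX : X = {x : Fin l → ℝ | ∀ i, 0 < x i})
    (hf : ContinuousOn f X) :
    (∀ (x : ℕ → Fin l → ℝ), (∀ k, x k ∈ X) → ∀ y ∈ X,
        (∀ i : Fin l,
          (y i : EReal) ≤ liminf (fun k => ((x k i : ℝ) : EReal)) atTop) →
        ((f y : EReal) ≤ liminf (fun k => ((f (x k) : ℝ) : EReal)) atTop))
    ↔
    (∀ y ∈ X, ∀ z ∈ X, (∀ i : Fin l, y i ≤ z i) → f y ≤ f z) := by
  have hXopen : IsOpen X := hX ▸ isOpen_setOf_forall_pos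
  constructor
  · intro h y hy z hz hyz
    have := h (fun _ => z) (fun _ => hz) y hy fun i => by
      simpa only [liminf_const] using EReal.coe_le_coe_iff.mpr (hyz i)
    simpa only [liminf_const, EReal.coe_le_coe_iff] using this
  · intro hmono x hx y hy hxy
    have hyX : X ∈ 𝓝 y := hXopen.mem_nhds hy
    exact MonotoneOn.le_liminf_of_le_liminf hmono hyX (hf.continuousAt hyX) hx hxy

/-- Lemma 4.9: for a continuous function `f` on the open positive orthant
`X = (ℝ_{>0})^l`, the liminf-type lower semicontinuity-from-below property (a)
is equivalent to componentwise monotonicity (b). -/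
theorem stmt_0 (l : ℕ) (hl : 1 ≤ l) (f : (Fin l → ℝ) → ℝ)
    (X : Set (Fin l → ℝ)) (hX : X = {x : Fin l → ℝ | ∀ i, 0 < x i})
    (hf : ContinuousOn f X) :
    (∀ (x : ℕ → Fin l → ℝ), (∀ k, x k ∈ X) → ∀ y ∈ X,
        (∀ i : Fin l,
          (y i : EReal) ≤ liminf (fun k => ((x k i : ℝ) : EReal)) atTop) →
        ((f y : EReal) ≤ liminf (fun k => ((f (x k) : ℝ) : EReal)) atTop))
    ↔
    (∀ y ∈ X, ∀ z ∈ X, (∀ i : Fin l, y i ≤ z i) → f y ≤ f z) :=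
  stmt_0_general l f X hX hf
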